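/- arXiv:2605.00848 — 2 statements merged into one kernel-verified Lean document; each statement's English description precedes it below -/
import Mathlib

section
/- Let x : ℝ → ℂ be both integrable and square-integrable. Then for every ω ∈ ℝ, the Fourier transform of the autocorrelation of x evaluated at ω equals the squared modulus of the Fourier transform of x at ω: ∫_ℝ R_xx(Δ) e^{-2πiωΔ} dΔ = |x̂(ω)|², where R_xx(Δ) = ∫_ℝ x(u+Δ) · conj(x(u)) du. -/
/-!
Multiplying `x` by the character `e(t) = exp(-2πiωt)` turns the Fourier integral of `R_xx` into
the plain integral of the autocorrelation of `g = x · e`, because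
`e(u + Δ) · conj (e u) = e Δ`. The shear `(Δ, u) ↦ (u + Δ, u)` preserves Lebesgue measure on
`ℝ × ℝ`, so by Fubini that integral splits as `(∫ g) · conj (∫ g) = |x̂(ω)|²`.
-/

open MeasureTheory

/-- The Fourier transform `x̂(ω) = ∫ x(t) e^{-2πiωt} dt` of an integrable function. -/
noncomputable def fourierTransform (x : ℝ → ℂ) (ω : ℝ) : ℂ :=
  ∫ t : ℝ, x t * Complex.exp (-2 * Real.pi * Complex.I * ω * t)

open ComplexConjugate Complex Real

theorem integral_integral_add_mul {G 𝕜 : Type*} [MeasurableSpace G] [AddGroup G]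
    [MeasurableAdd₂ G] [RCLike 𝕜] {μ ν : Measure G} [SFinite μ] [SFinite ν]
    [μ.IsAddLeftInvariant] {f h : G → 𝕜} (hf : Integrable f μ) (hh : Integrable h ν) :
    ∫ Δ, ∫ u, f (u + Δ) * h u ∂ν ∂μ = (∫ t, f t ∂μ) * ∫ t, h t ∂ν := by
  have hshear : MeasurePreserving (fun p : G × G => (p.2 + p.1, p.2)) (μ.prod ν) (μ.prod ν) :=
    Measure.measurePreserving_swap.comp (measurePreserving_prod_add_swap μ ν)
  have hprod : Integrable (fun p : G × G => f p.1 * h p.2) (μ.prod ν) := hf.mul_prod hh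
  calc ∫ Δ, ∫ u, f (u + Δ) * h u ∂ν ∂μ = ∫ p, f (p.2 + p.1) * h p.2 ∂μ.prod ν :=
        integral_integral (hshear.integrable_comp_of_integrable hprod)
    _ = ∫ p, f p.1 * h p.2 ∂μ.prod ν := by
        conv_rhs => rw [← hshear.map_eq]
        exact (integral_map hshear.measurable.aemeasurable
          (hshear.map_eq ▸ hprod.aestronglyMeasurable)).symm
    _ = (∫ t, f t ∂μ) * ∫ t, h t ∂ν := integral_prod_mul f h

theorem integral_integral_add_mul_conj {G 𝕜 : Type*} [MeasurableSpace G] [AddGroup G]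
    [MeasurableAdd₂ G] [RCLike 𝕜] {μ : Measure G} [SFinite μ] [μ.IsAddLeftInvariant]
    {f : G → 𝕜} (hf : Integrable f μ) :
    ∫ Δ, ∫ u, f (u + Δ) * conj (f u) ∂μ ∂μ = ‖∫ t, f t ∂μ‖ ^ 2 := by
  have hconj : Integrable (fun t => conj (f t)) μ :=
    RCLike.conjLIE.integrable_comp_iff.mpr hf
  rw [integral_integral_add_mul hf hconj, integral_conj, RCLike.mul_conj]

theorem norm_exp_neg_two_pi_I_mul (ω t : ℝ) : ‖cexp (-2 * π * I * ω * t)‖ = 1 := by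
  rw [norm_exp]; simp

theorem exp_neg_two_pi_I_mul_add_mul_conj (ω u Δ : ℝ) :
    cexp (-2 * π * I * ω * ↑(u + Δ)) * conj (cexp (-2 * π * I * ω * u)) =
      cexp (-2 * π * I * ω * Δ) := by
  rw [← exp_conj, ← Complex.exp_add]
  congr 1
  simp only [map_mul, map_neg, map_ofNat, conj_I, conj_ofReal]
  push_cast
  ring

theorem MeasureTheory.Integrable.mul_exp_neg_two_pi_I_mul {x : ℝ → ℂ} (hx : Integrable x)
    (ω : ℝ) : Integrable (fun t : ℝ => x t * cexp (-2 * π * I * ω * t)) :=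
  hx.mul_bdd (by fun_prop) (.of_forall fun t => (norm_exp_neg_two_pi_I_mul ω t).le)

theorem fourier_autocorrelation_eq_normSq_fourier_general
    (x : ℝ → ℂ) (hx1 : Integrable x (volume : Measure ℝ)) (ω : ℝ) :
    (∫ Δ : ℝ, (∫ u : ℝ, x (u + Δ) * (starRingEnd ℂ) (x u)) *
        Complex.exp (-2 * Real.pi * Complex.I * ω * Δ)) =
      ((‖fourierTransform x ω‖ ^ 2 : ℝ) : ℂ) := by
  have hmod (Δ : ℝ) : (∫ u, x (u + Δ) * conj (x u)) * cexp (-2 * π * I * ω * Δ) =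
      ∫ u, x (u + Δ) * cexp (-2 * π * I * ω * ↑(u + Δ)) *
        conj (x u * cexp (-2 * π * I * ω * u)) := by
    rw [← integral_mul_const]
    congr 1 with u
    rw [← exp_neg_two_pi_I_mul_add_mul_conj ω u Δ, map_mul]
    ring
  rw [integral_congr_ae (.of_forall hmod), ofReal_pow]
  exact integral_integral_add_mul_conj (hx1.mul_exp_neg_two_pi_I_mul ω)

/-- Wiener–Khinchin: for `x ∈ L¹ ∩ L²(ℝ)` and every `ω`, the Fourier
transform of the autocorrelation `R_xx(Δ) = ∫ x(u+Δ) conj(x(u)) du` at `ω` equals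
`|x̂(ω)|²`. -/
theorem fourier_autocorrelation_eq_normSq_fourier
    (x : ℝ → ℂ) (hx1 : Integrable x (volume : Measure ℝ))
    (hx2 : MemLp x 2 (volume : Measure ℝ)) (ω : ℝ) :
    (∫ Δ : ℝ, (∫ u : ℝ, x (u + Δ) * (starRingEnd ℂ) (x u)) *
        Complex.exp (-2 * Real.pi * Complex.I * ω * Δ)) =
      ((‖fourierTransform x ω‖ ^ 2 : ℝ) : ℂ) :=
  fourier_autocorrelation_eq_normSq_fourier_general x hx1 ω
end

section
/- Heisenberg–Robertson uncertainty inequality for time and frequency: let f : ℝ → ℂ be a Schwartz function. Then ( ∫_ℝ |f(t)|² dt )² ≤ 4 · ( ∫_ℝ t² |f(t)|² dt ) · ( ∫_ℝ |f'(t)|² dt ). In particular, if ‖f‖_{L²} = 1, then the product of the time spread Δt² = ∫ t²|f(t)|² dt and the frequency spread Δω² = ∫ |f'(t)|² dt is at least 1/4, i.e., Δω·Δt ≥ 1/2. -/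
/-!
The derivative of `t ↦ t ‖f t‖²` is `‖f t‖² + 2 ⟪t • f t, f' t⟫` and integrates to zero, so
`∫ ‖f‖² = -2 ⟪t • f, f'⟫`, the inner product being that of the real Hilbert space `L²(ℝ, E)`;
this is the commutator relation `[X, d/dt] = -1` evaluated on `f`. The Cauchy–Schwarz
inequality in `L²` then bounds `(∫ ‖f‖²)² = 4 ⟪t • f, f'⟫²` by `4 ‖t • f‖² ‖f'‖²`.
-/

open MeasureTheory
open scoped RealInnerProductSpace

namespace SchwartzMap

section Inner

variable {D E : Type*} [NormedAddCommGroup D] [NormedSpace ℝ D] [MeasurableSpace D]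
  [BorelSpace D] [SecondCountableTopology D] [NormedAddCommGroup E] [InnerProductSpace ℝ E]

theorem integrable_inner (f g : 𝓢(D, E)) (μ : Measure D := by volume_tac)
    [μ.HasTemperateGrowth] : Integrable (fun x ↦ ⟪f x, g x⟫) μ :=
  (pairing (innerSL ℝ) f g).integrable

theorem integrable_norm_sq (f : 𝓢(D, E)) (μ : Measure D := by volume_tac)
    [μ.HasTemperateGrowth] : Integrable (fun x ↦ ‖f x‖ ^ 2) μ := by
  simpa only [real_inner_self_eq_norm_sq] using integrable_inner f f μ

theorem real_inner_toL2_toL2_eq (f g : 𝓢(D, E)) (μ : Measure D := by volume_tac)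
    [μ.HasTemperateGrowth] : ⟪f.toLp 2 μ, g.toLp 2 μ⟫ = ∫ x, ⟪f x, g x⟫ ∂μ := by
  apply integral_congr_ae
  filter_upwards [f.coeFn_toLp 2 μ, g.coeFn_toLp 2 μ] with x hf hg
  rw [hf, hg]

theorem norm_toL2_sq (f : 𝓢(D, E)) (μ : Measure D := by volume_tac) [μ.HasTemperateGrowth] :
    ‖f.toLp 2 μ‖ ^ 2 = ∫ x, ‖f x‖ ^ 2 ∂μ := by
  simp only [← real_inner_self_eq_norm_sq, real_inner_toL2_toL2_eq]

end Inner

section Line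

variable {E : Type*} [NormedAddCommGroup E] [InnerProductSpace ℝ E]

theorem smulLeftCLM_id_apply (f : 𝓢(ℝ, E)) (t : ℝ) :
    smulLeftCLM E (fun s : ℝ ↦ s) f t = t • f t :=
  smulLeftCLM_apply_apply Function.HasTemperateGrowth.id' f t

theorem integral_norm_sq_eq_neg_two_mul_integral_inner (f : 𝓢(ℝ, E)) :
    ∫ t, ‖f t‖ ^ 2 = -2 * ∫ t, ⟪t • f t, deriv f t⟫ := by
  have hderiv : ∀ t, HasDerivAt (fun s ↦ s * ‖f s‖ ^ 2)
      (‖f t‖ ^ 2 + 2 * ⟪t • f t, deriv f t⟫) t := by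
    intro t
    refine ((hasDerivAt_id t).mul (f.hasDerivAt t).norm_sq).congr_deriv ?_
    rw [real_inner_smul_left]
    simp only [id, one_mul]
    ring
  have hcross : Integrable (fun t ↦ ⟪t • f t, deriv f t⟫) := by
    simpa only [smulLeftCLM_id_apply, derivCLM_apply] using
      integrable_inner (smulLeftCLM E (fun s : ℝ ↦ s) f) (derivCLM ℝ E f)
  have hmoment : Integrable (fun t ↦ t * ‖f t‖ ^ 2) := by
    simpa only [smulLeftCLM_id_apply, real_inner_smul_left, real_inner_self_eq_norm_sq] using
      integrable_inner (smulLeftCLM E (fun s : ℝ ↦ s) f) f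
  have hzero := integral_eq_zero_of_hasDerivAt_of_integrable hderiv
    ((integrable_norm_sq f).add (hcross.const_mul 2)) hmoment
  have hsplit := integral_add (integrable_norm_sq f) (hcross.const_mul 2)
  rw [integral_const_mul] at hsplit
  linarith

theorem sq_integral_norm_sq_le (f : 𝓢(ℝ, E)) :
    (∫ t, ‖f t‖ ^ 2) ^ 2 ≤ 4 * ((∫ t, t ^ 2 * ‖f t‖ ^ 2) * ∫ t, ‖deriv f t‖ ^ 2) := by
  set U := (smulLeftCLM E (fun s : ℝ ↦ s) f).toLp 2
  set V := (derivCLM ℝ E f).toLp 2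
  have hI : ∫ t, ‖f t‖ ^ 2 = -2 * ⟪U, V⟫ := by
    simp only [U, V, real_inner_toL2_toL2_eq, smulLeftCLM_id_apply, derivCLM_apply,
      integral_norm_sq_eq_neg_two_mul_integral_inner]
  have hA : ∫ t, t ^ 2 * ‖f t‖ ^ 2 = ‖U‖ ^ 2 := by
    simp only [U, norm_toL2_sq, smulLeftCLM_id_apply, norm_smul, mul_pow, Real.norm_eq_abs, sq_abs]
  have hB : ∫ t, ‖deriv f t‖ ^ 2 = ‖V‖ ^ 2 := by
    simp only [V, norm_toL2_sq, derivCLM_apply]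
  have hCS : ⟪U, V⟫ ^ 2 ≤ ‖U‖ ^ 2 * ‖V‖ ^ 2 := by
    rw [← mul_pow, ← sq_abs]
    exact pow_le_pow_left₀ (abs_nonneg _) (abs_real_inner_le_norm U V) 2
  rw [hI, hA, hB]
  linarith

end Line

end SchwartzMap

/-- Heisenberg–Robertson uncertainty inequality: for a Schwartz
function `f`, `(∫ |f|²)² ≤ 4 (∫ t²|f(t)|² dt)(∫ |f'(t)|² dt)`; in particular, if
`‖f‖_{L²} = 1` then `Δt²·Δω² ≥ 1/4`. -/
theorem heisenberg_robertson_uncertainty (f : SchwartzMap ℝ ℂ) :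
    (∫ t : ℝ, ‖f t‖ ^ 2) ^ 2 ≤
      4 * ((∫ t : ℝ, t ^ 2 * ‖f t‖ ^ 2) * ∫ t : ℝ, ‖deriv (⇑f) t‖ ^ 2) ∧
    ((∫ t : ℝ, ‖f t‖ ^ 2) = 1 →
      1 / 4 ≤ (∫ t : ℝ, t ^ 2 * ‖f t‖ ^ 2) * ∫ t : ℝ, ‖deriv (⇑f) t‖ ^ 2) := by
  have h := SchwartzMap.sq_integral_norm_sq_le f
  refine ⟨h, fun hnorm ↦ ?_⟩
  rw [hnorm, one_pow] at h
  linarith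
end
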